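/- Let n ∈ ℤ and define Γ_n(s) = ∏_{j=0}^{|n|−1} (is + 1/2 + j)^{−1}·(−is + 1/2 + j). Then for every complex number z = σ + it with σ ∈ ℝ and |t| ≤ min(1/4, 1/(1+|n|)), one has |1/Γ_n(z)| ≤ C for an absolute constant C independent of n. -/

import Mathlib

/-!
Writing `z = σ + it`, the `j`-th factor of `1/Γ_n(z)` is `w / w'` with
`w = (1/2 + j - t) + iσ` and `w' = (1/2 + j + t) - iσ`. The imaginary parts have equal size and,
for `|t| ≤ 1/4`, the real parts satisfy `1/2 + j - t ≤ (1 + 8|t|)(1/2 + j + t)`, so every factor has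
norm at most `1 + 8|t| ≤ exp (8|t|)`. Hence `‖1/Γ_n(z)‖ ≤ exp (8 |n| |t|)`, and `|n| |t| ≤ 1` on the strip.
-/

noncomputable section

/-- `Γ_n(s) = ∏_{j=0}^{|n|−1} (is + 1/2 + j)⁻¹ · (−is + 1/2 + j)`. -/
def Gam (n : ℤ) (z : ℂ) : ℂ :=
  ∏ j ∈ Finset.range n.natAbs,
    ((Complex.I * z + 1/2 + (j : ℂ))⁻¹ * (-(Complex.I * z) + 1/2 + (j : ℂ)))

open Complex Finset

lemma Complex.norm_le_mul_norm_of_abs_re_le_of_abs_im_le {w w' : ℂ} {c : ℝ} (hc : 1 ≤ c)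
    (hre : |w.re| ≤ c * |w'.re|) (him : |w.im| ≤ |w'.im|) : ‖w‖ ≤ c * ‖w'‖ := by
  rw [← pow_le_pow_iff_left₀ (norm_nonneg w) (by positivity) two_ne_zero, mul_pow,
    Complex.sq_norm, Complex.sq_norm, normSq_apply, normSq_apply]
  have hre_sq : w.re * w.re ≤ c ^ 2 * (w'.re * w'.re) := by
    rw [← abs_mul_abs_self w.re, ← abs_mul_abs_self w'.re]
    nlinarith [abs_nonneg w.re]
  have him_sq : w.im * w.im ≤ w'.im * w'.im := by
    rw [← abs_mul_abs_self w.im, ← abs_mul_abs_self w'.im]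
    exact mul_self_le_mul_self (abs_nonneg _) him
  nlinarith [mul_self_nonneg w'.im, one_le_pow₀ (n := 2) hc]

lemma sub_le_one_add_mul_add {x t : ℝ} (hx : 1 / 2 ≤ x) (ht : |t| ≤ 1 / 4) :
    x - t ≤ (1 + 8 * |t|) * (x + t) := by
  nlinarith [neg_abs_le t, abs_nonneg t]

lemma Real.one_add_pow_le_exp_mul {a : ℝ} (ha : -1 ≤ a) (N : ℕ) :
    (1 + a) ^ N ≤ exp (N * a) := by
  calc (1 + a) ^ N ≤ exp a ^ N :=
        pow_le_pow_left₀ (by linarith) (by linarith [add_one_le_exp a]) N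
    _ = exp (N * a) := (exp_nat_mul a N).symm

lemma norm_Gam_factor_le {z : ℂ} (hz : |z.im| ≤ 1 / 4) (j : ℕ) :
    ‖(I * z + 1 / 2 + j) / (-(I * z) + 1 / 2 + j)‖ ≤ 1 + 8 * |z.im| := by
  have hw_re : (I * z + 1 / 2 + j).re = 1 / 2 + j - z.im := by simp; ring
  have hw'_re : (-(I * z) + 1 / 2 + j).re = 1 / 2 + j + z.im := by simp; ring
  have hx : (1 : ℝ) / 2 ≤ 1 / 2 + j := by simp
  have ht := abs_le.mp hz
  have hre : |(I * z + 1 / 2 + j).re| ≤ (1 + 8 * |z.im|) * |(-(I * z) + 1 / 2 + j).re| := by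
    rw [hw_re, hw'_re, abs_of_nonneg (a := 1 / 2 + j - z.im) (by linarith),
      abs_of_nonneg (a := 1 / 2 + j + z.im) (by linarith)]
    exact sub_le_one_add_mul_add hx hz
  have him : |(I * z + 1 / 2 + j).im| ≤ |(-(I * z) + 1 / 2 + j).im| := by simp
  rw [norm_div]
  exact div_le_of_le_mul₀ (norm_nonneg _) (by positivity)
    (norm_le_mul_norm_of_abs_re_le_of_abs_im_le (by simp) hre him)

lemma norm_inv_Gam_le_pow {z : ℂ} (hz : |z.im| ≤ 1 / 4) (n : ℤ) :
    ‖(Gam n z)⁻¹‖ ≤ (1 + 8 * |z.im|) ^ n.natAbs := by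
  have hGam : (Gam n z)⁻¹ =
      ∏ j ∈ range n.natAbs, (I * z + 1 / 2 + j) / (-(I * z) + 1 / 2 + j) := by
    simp only [Gam, ← prod_inv_distrib, mul_inv, inv_inv, div_eq_mul_inv, mul_comm]
  calc ‖(Gam n z)⁻¹‖
      ≤ ∏ _j ∈ range n.natAbs, (1 + 8 * |z.im|) := by
        rw [hGam, norm_prod]
        exact prod_le_prod (fun _ _ => norm_nonneg _) fun j _ => norm_Gam_factor_le hz j
    _ = (1 + 8 * |z.im|) ^ n.natAbs := by rw [prod_const, card_range]

/-- `1/Γ_n` is bounded, uniformly in `n`, on the horizontal strip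
`{σ + it : |t| ≤ min(1/4, 1/(1+|n|))}`. -/
theorem stmt_5 : ∃ C > 0, ∀ n : ℤ, ∀ z : ℂ,
    |z.im| ≤ min (1/4 : ℝ) (1 / (1 + |(n : ℝ)|)) → ‖(Gam n z)⁻¹‖ ≤ C := by
  refine ⟨Real.exp 8, Real.exp_pos 8, fun n z hz => ?_⟩
  have hN : |(n : ℝ)| = n.natAbs := by rw [Nat.cast_natAbs, Int.cast_abs]
  rw [le_min_iff, hN] at hz
  have hN_mul : (n.natAbs : ℝ) * |z.im| ≤ 1 := by
    have := (le_div_iff₀ (by positivity)).mp hz.2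
    nlinarith [abs_nonneg z.im]
  calc ‖(Gam n z)⁻¹‖ ≤ (1 + 8 * |z.im|) ^ n.natAbs := norm_inv_Gam_le_pow hz.1 n
    _ ≤ Real.exp (n.natAbs * (8 * |z.im|)) :=
        Real.one_add_pow_le_exp_mul (by linarith [abs_nonneg z.im]) _
    _ ≤ Real.exp 8 := Real.exp_le_exp.mpr (by linarith)
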